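/- arXiv:1701.02547 — 7 statements merged into one kernel-verified Lean document; each statement's English description precedes it below -/
import Mathlib

section
/- Let (X, M_X) be a quasi-Borel space and (Y, Σ_Y) a measurable space. A function f : X → Y is measurable from (X, Σ_{M_X}) to (Y, Σ_Y) if and only if f is a morphism of quasi-Borel spaces from (X, M_X) to (Y, {α : ℝ → Y | α measurable}). -/
open MeasureTheory

/-- A quasi-Borel space structure on `X`: a set of functions `ℝ → X` closed under
precomposition with Borel maps, containing constants, and closed under countable gluing. -/
def IsQBS {X : Type*} (M : Set (ℝ → X)) : Prop :=
  (∀ α ∈ M, ∀ f : ℝ → ℝ, Measurable f → α ∘ f ∈ M) ∧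
  (∀ x : X, (fun _ : ℝ => x) ∈ M) ∧
  (∀ S : ℕ → Set ℝ, (∀ i, MeasurableSet (S i)) → Pairwise (Function.onFun Disjoint S) →
    (⋃ i, S i) = Set.univ →
    ∀ α : ℕ → ℝ → X, (∀ i, α i ∈ M) →
    ∀ β : ℝ → X, (∀ i, ∀ r ∈ S i, β r = α i r) → β ∈ M)

/-- A morphism of quasi-Borel spaces. -/
def IsQBSMorphism {X Y : Type*} (MX : Set (ℝ → X)) (MY : Set (ℝ → Y)) (f : X → Y) : Prop :=
  ∀ α ∈ MX, f ∘ α ∈ MY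

/-- The σ-algebra induced on `X` by a quasi-Borel structure `M`. -/
def qbsSigma {X : Type*} (M : Set (ℝ → X)) : MeasurableSpace X where
  MeasurableSet' U := ∀ α ∈ M, MeasurableSet (α ⁻¹' U)
  measurableSet_empty := fun α _ => by simp
  measurableSet_compl := fun U hU α hα => by
    rw [Set.preimage_compl]; exact (hU α hα).compl
  measurableSet_iUnion := fun U hU α hα => by
    rw [Set.preimage_iUnion]; exact MeasurableSet.iUnion fun i => hU i α hα


/-- For a quasi-Borel space `(X, MX)` and a measurable space `Y`: `f : X → Y` is
measurable from the induced σ-algebra iff `f` is a quasi-Borel morphism into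
`Y` with its measurable-function quasi-Borel structure. -/
theorem stmt5 {X Y : Type*} [mY : MeasurableSpace Y] (MX : Set (ℝ → X))
    (hX : IsQBS MX) (f : X → Y) :
    @Measurable X Y (qbsSigma MX) mY f ↔
      IsQBSMorphism MX {α : ℝ → Y | Measurable α} f := by
  constructor
  · intro hf α hα
    exact fun U hU => hf hU α hα
  · intro hf U hU α hα
    exact hf α hα hU
end

section
/- If (X, Σ_X) is a standard Borel space (a measurable space that is a retract of ℝ in the category of measurable spaces) and (Y, Σ_Y) is any measurable space, then a function g : X → Y is measurable if and only if g ∘ α : ℝ → Y is measurable for every measurable α : ℝ → X. -/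
open MeasureTheory

/-- If `X` is standard Borel (a retract of `ℝ`), then `g : X → Y` is measurable iff
`g ∘ α` is measurable for every measurable `α : ℝ → X`. -/
theorem stmt6 {X Y : Type*} [MeasurableSpace X] [MeasurableSpace Y]
    (f : X → ℝ) (h : ℝ → X) (hf : Measurable f) (hh : Measurable h)
    (hret : h ∘ f = id) (g : X → Y) :
    Measurable g ↔ ∀ α : ℝ → X, Measurable α → Measurable (g ∘ α) := by
  constructor
  · exact fun hg α hα => hg.comp hα
  · intro H
    have : g = (g ∘ h) ∘ f := by
      rw [Function.comp_assoc, hret, Function.comp_id]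
    rw [this]
    exact (H h hh).comp hf
end

section
/- For a standard Borel space (X, Σ_X), the σ-algebra induced by the quasi-Borel structure of measurable maps ℝ → X coincides with Σ_X: i.e., Σ_X = {U ⊆ X | ∀ α : ℝ → X measurable, α⁻¹(U) Borel}. -/
open MeasureTheory

/-- For a standard Borel space `X` (a retract of `ℝ`), the σ-algebra induced by the
quasi-Borel structure of measurable maps `ℝ → X` coincides with the given one. -/
theorem stmt7 {X : Type*} [MeasurableSpace X]
    (f : X → ℝ) (h : ℝ → X) (hf : Measurable f) (hh : Measurable h)
    (hret : h ∘ f = id) :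
    ∀ U : Set X, MeasurableSet U ↔
      ∀ α : ℝ → X, Measurable α → MeasurableSet (α ⁻¹' U) := by
  intro U
  constructor
  · intro hU α hα; exact hα hU
  · intro hall
    have : U = f ⁻¹' (h ⁻¹' U) := by
      rw [← Set.preimage_comp, hret, Set.preimage_id]
    rw [this]
    exact hf (hall h hh)
end

section
/- For quasi-Borel spaces (X, M_X) and (Y, M_Y), let Y^X be the set of morphisms X → Y and M_{Y^X} := {α : ℝ → Y^X | uncurry α : ℝ × X → Y is a morphism from the product quasi-Borel space}. Then (Y^X, M_{Y^X}) is a quasi-Borel space, the evaluation map Y^X × X → Y is a morphism, and currying gives a bijection between morphisms Z × X → Y and morphisms Z → Y^X, natural in Z. Hence the category of quasi-Borel spaces is cartesian closed. -/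
open MeasureTheory

/-- The binary product quasi-Borel structure. -/
def qbsProd {X Y : Type*} (MX : Set (ℝ → X)) (MY : Set (ℝ → Y)) : Set (ℝ → X × Y) :=
  {f | (fun r => (f r).1) ∈ MX ∧ (fun r => (f r).2) ∈ MY}

/-- The quasi-Borel structure on `ℝ`: Borel measurable endofunctions. -/
def MR : Set (ℝ → ℝ) := {f : ℝ → ℝ | Measurable f}

/-- The set of quasi-Borel morphisms `X → Y`. -/
def QBSHom {X Y : Type*} (MX : Set (ℝ → X)) (MY : Set (ℝ → Y)) :=
  {f : X → Y // IsQBSMorphism MX MY f}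

/-- The function-space quasi-Borel structure: `α : ℝ → Y^X` belongs iff its uncurrying
is a morphism from the product quasi-Borel space `ℝ × X`. -/
def funcQBS {X Y : Type*} (MX : Set (ℝ → X)) (MY : Set (ℝ → Y)) :
    Set (ℝ → QBSHom MX MY) :=
  {α | IsQBSMorphism (qbsProd MR MX) MY (fun p => (α p.1).1 p.2)}

/-- Function spaces: `(Y^X, M_{Y^X})` is a quasi-Borel space, evaluation is a
morphism, and currying gives a bijection between morphisms `Z × X → Y` and
morphisms `Z → Y^X`. Hence quasi-Borel spaces form a cartesian closed category. -/
theorem stmt10 {X Y : Type*} (MX : Set (ℝ → X)) (MY : Set (ℝ → Y))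
    (hX : IsQBS MX) (hY : IsQBS MY) :
    IsQBS (funcQBS MX MY) ∧
    IsQBSMorphism (qbsProd (funcQBS MX MY) MX) MY (fun p => p.1.1 p.2) ∧
    (∀ {Z : Type*} (MZ : Set (ℝ → Z)), IsQBS MZ →
      ∀ g : Z × X → Y, IsQBSMorphism (qbsProd MZ MX) MY g →
      ∃! gc : Z → QBSHom MX MY,
        IsQBSMorphism MZ (funcQBS MX MY) gc ∧ ∀ z x, (gc z).1 x = g (z, x)) := by
  obtain ⟨hX1, hX2, hX3⟩ := hX
  obtain ⟨hY1, hY2, hY3⟩ := hY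
  refine ⟨⟨?_, ?_, ?_⟩, ?_, ?_⟩
  · -- closure under precomposition
    intro α hα f hf γ hγ
    exact hα (fun r => (f (γ r).1, (γ r).2)) ⟨hf.comp hγ.1, hγ.2⟩
  · -- constants
    intro φ γ hγ
    exact φ.2 _ hγ.2
  · -- gluing
    intro S hS hdisj hcover α hα β hβ γ hγ
    refine hY3 (fun i => (fun r => (γ r).1) ⁻¹' S i)
      (fun i => hγ.1 (hS i)) ?_ ?_
      (fun i => (fun p => (α i p.1).1 p.2) ∘ γ) (fun i => hα i γ hγ)
      _ ?_
    · intro i j hij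
      exact Set.disjoint_left.mpr fun r hi hj =>
        Set.disjoint_left.mp (hdisj hij) hi hj
    · ext r
      simp only [Set.mem_iUnion, Set.mem_preimage, Set.mem_univ, iff_true]
      have := Set.eq_univ_iff_forall.mp hcover (γ r).1
      simpa using this
    · intro i r hr
      show (β (γ r).1).1 (γ r).2 = (α i (γ r).1).1 (γ r).2
      rw [hβ i _ hr]
  · -- evaluation
    intro ρ hρ
    exact hρ.1 (fun r => (r, (ρ r).2)) ⟨measurable_id, hρ.2⟩
  · -- currying
    intro Z MZ hZ g hg
    obtain ⟨hZ1, hZ2, hZ3⟩ := hZ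
    refine ⟨fun z => ⟨fun x => g (z, x), fun a ha => hg (fun r => (z, a r)) ⟨hZ2 z, ha⟩⟩,
      ⟨?_, fun z x => rfl⟩, ?_⟩
    · intro δ hδ γ hγ
      exact hg (fun r => (δ (γ r).1, (γ r).2)) ⟨hZ1 δ hδ _ hγ.1, hγ.2⟩
    · intro gc' ⟨_, h2⟩
      funext z
      exact Subtype.ext (funext fun x => h2 z x)
end

section
/- Two probability measures (α, μ) and (α′, μ′) on a quasi-Borel space (X, M_X) have equal push-forwards α_*μ = α′_*μ′ on (X, Σ_{M_X}) if and only if ∫ f d(α,μ) = ∫ f d(α′,μ′) for every morphism f : (X, M_X) → ℝ, where ∫ f d(α,μ) := ∫_ℝ (f ∘ α) dμ. -/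
open MeasureTheory

/-- Two probability measures `(α, μ)` and `(α', μ')` on a quasi-Borel space have equal
push-forwards on the induced σ-algebra iff they integrate every real-valued morphism
equally. -/
theorem stmt12 {X : Type*} (M : Set (ℝ → X)) (hM : IsQBS M)
    (α α' : ℝ → X) (μ μ' : Measure ℝ) (hα : α ∈ M) (hα' : α' ∈ M)
    (hμ : IsProbabilityMeasure μ) (hμ' : IsProbabilityMeasure μ') :
    @Measure.map ℝ X _ (qbsSigma M) α μ = @Measure.map ℝ X _ (qbsSigma M) α' μ' ↔
      ∀ f : X → ℝ, IsQBSMorphism M {g : ℝ → ℝ | Measurable g} f →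
        ∫ r, f (α r) ∂μ = ∫ r, f (α' r) ∂μ' := by

  letI : MeasurableSpace X := qbsSigma M
  have hαm : Measurable α := fun U hU => hU α hα
  have hα'm : Measurable α' := fun U hU => hU α' hα'
  constructor
  · intro h f hf
    have hfm : Measurable f := fun U hU β hβ => (hf β hβ) hU
    rw [show (∫ r, f (α r) ∂μ) = ∫ x, f x ∂(Measure.map α μ) from
        (integral_map hαm.aemeasurable hfm.aestronglyMeasurable).symm,
      show (∫ r, f (α' r) ∂μ') = ∫ x, f x ∂(Measure.map α' μ') from
        (integral_map hα'm.aemeasurable hfm.aestronglyMeasurable).symm, h]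
  · intro h
    ext U hU
    rw [Measure.map_apply hαm hU, Measure.map_apply hα'm hU]
    have key := h (U.indicator fun _ => (1:ℝ)) (by
      intro β hβ
      have : (U.indicator fun _ => (1:ℝ)) ∘ β = (β ⁻¹' U).indicator fun _ => (1:ℝ) := by
        ext r; by_cases hr : β r ∈ U <;> simp [Set.indicator, hr]
      rw [Set.mem_setOf_eq, this]
      exact Measurable.indicator measurable_const (hU β hβ))
    have h1 : ∫ r, (U.indicator fun _ => (1:ℝ)) (α r) ∂μ = (μ (α ⁻¹' U)).toReal := by
      have : ∀ r, (U.indicator fun _ => (1:ℝ)) (α r)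
          = (α ⁻¹' U).indicator (fun _ => (1:ℝ)) r := by
        intro r; by_cases hr : α r ∈ U <;> simp [Set.indicator, hr]
      simp_rw [this]
      rw [integral_indicator_const (1:ℝ) (hU α hα)]; simp; rfl
    have h2 : ∫ r, (U.indicator fun _ => (1:ℝ)) (α' r) ∂μ' = (μ' (α' ⁻¹' U)).toReal := by
      have : ∀ r, (U.indicator fun _ => (1:ℝ)) (α' r)
          = (α' ⁻¹' U).indicator (fun _ => (1:ℝ)) r := by
        intro r; by_cases hr : α' r ∈ U <;> simp [Set.indicator, hr]
      simp_rw [this]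
      rw [integral_indicator_const (1:ℝ) (hU α' hα')]; simp; rfl
    rw [h1, h2] at key
    exact (ENNReal.toReal_eq_toReal_iff' (measure_ne_top μ _) (measure_ne_top μ' _)).mp key
end

section
/- For every standard Borel space (X, Σ_X), the map l_X : P(X) → G(X), [α, μ] ↦ α_*μ, is a bijection between equivalence classes of quasi-Borel probability measures on X and Borel probability measures on X. In particular, every probability measure ν on a standard Borel space X arises as α_*μ for some measurable α : ℝ → X and Borel probability measure μ on ℝ. -/
open MeasureTheory

/-- Pairs `(α, μ)` of a random element and a measure on `ℝ`, prior to quotienting. -/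
def PPre (X : Type*) : Type _ := (ℝ → X) × Measure ℝ

/-- Equivalence of quasi-Borel measures: equal push-forwards on the induced σ-algebra. -/
def prel {X : Type*} (M : Set (ℝ → X)) (p q : PPre X) : Prop :=
  @Measure.map ℝ X _ (qbsSigma M) p.1 p.2 = @Measure.map ℝ X _ (qbsSigma M) q.1 q.2

/-- The space `P(X)` of equivalence classes of quasi-Borel probability measures. -/
def PSpace {X : Type*} (M : Set (ℝ → X)) : Type _ := Quot (prel M)

/-- The equivalence class of `(α, μ)` in `P(X)`. -/
def mkP {X : Type*} (M : Set (ℝ → X)) (α : ℝ → X) (μ : Measure ℝ) : PSpace M :=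
  Quot.mk (prel M) (α, μ)

lemma qbsSigma_eq_of_retract {X : Type*} [mX : MeasurableSpace X]
    (f : X → ℝ) (h : ℝ → X) (hf : Measurable f) (hh : Measurable h)
    (hret : h ∘ f = id) :
    qbsSigma {γ : ℝ → X | Measurable γ} = mX := by
  ext U
  constructor
  · intro hU
    have h1 : MeasurableSet (h ⁻¹' U) := hU h hh
    have h2 : MeasurableSet (f ⁻¹' (h ⁻¹' U)) := hf h1
    have : f ⁻¹' (h ⁻¹' U) = U := by
      rw [← Set.preimage_comp, hret, Set.preimage_id]
    rwa [this] at h2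
  · intro hU α hα
    exact hα hU

/-- For a standard Borel space `X` (a retract of `ℝ`), the map `[α, μ] ↦ α_*μ` is a
bijection between equivalence classes of quasi-Borel probability measures on `X` and
Borel probability measures on `X`: classes are determined by the push-forward, and
every probability measure on `X` arises as a push-forward. -/
theorem stmt16 {X : Type*} [mX : MeasurableSpace X]
    (f : X → ℝ) (h : ℝ → X) (hf : Measurable f) (hh : Measurable h)
    (hret : h ∘ f = id) :
    -- injectivity: equal push-forwards (as Borel measures) iff equivalent
    (∀ (α α' : ℝ → X) (μ μ' : Measure ℝ),
      Measurable α → Measurable α' → IsProbabilityMeasure μ → IsProbabilityMeasure μ' →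
      (Measure.map α μ = Measure.map α' μ' ↔
        mkP {γ : ℝ → X | Measurable γ} α μ = mkP {γ : ℝ → X | Measurable γ} α' μ')) ∧
    -- surjectivity: every probability measure on X is a push-forward
    (∀ ν : Measure X, IsProbabilityMeasure ν →
      ∃ (α : ℝ → X) (μ : Measure ℝ), Measurable α ∧ IsProbabilityMeasure μ ∧
        Measure.map α μ = ν) := by
  have hq := qbsSigma_eq_of_retract f h hf hh hret
  have hprel : ∀ p q : PPre X, prel {γ : ℝ → X | Measurable γ} p q ↔
      Measure.map p.1 p.2 = Measure.map q.1 q.2 := by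
    intro p q
    unfold prel
    rw [hq]
  have hequiv : Equivalence (prel ({γ : ℝ → X | Measurable γ})) :=
    ⟨fun _ => rfl, fun hab => hab.symm, fun hab hbc => hab.trans hbc⟩
  constructor
  · intro α α' μ μ' hα hα' hμ hμ'
    constructor
    · intro heq
      exact Quot.sound ((hprel (α, μ) (α', μ')).mpr heq)
    · intro heq
      have := Quot.eq.mp heq
      exact (hprel (α, μ) (α', μ')).mp (hequiv.eqvGen_iff.mp this)
  · intro ν hν
    refine ⟨h, Measure.map f ν, hh, Measure.isProbabilityMeasure_map hf.aemeasurable, ?_⟩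
    rw [Measure.map_map hh hf, hret, Measure.map_id]
end

section
/- Randomization: Let (X, Σ_X) be a measurable space. For every probability kernel k : X × Borel(ℝ) → [0,1] (i.e., k(x,·) is a probability measure for each x and k(·,U) is measurable for each Borel U), there exists a jointly measurable function f : ℝ × X → ℝ such that k(x, U) = υ{r ∈ ℝ | f(r,x) ∈ U} for all x and Borel U, where υ is the uniform (Lebesgue) probability measure on [0,1]. -/
open MeasureTheory

section Aux

open ProbabilityTheory Set Filter Topology

/-- The cdf of `k x` as a function of `x` and `y`. -/
noncomputable def kcdf {X : Type*} (k : X → Measure ℝ) (x : X) (y : ℝ) : ℝ := cdf (k x) y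

/-- Quantile-type function. -/
noncomputable def kquant {X : Type*} (k : X → Measure ℝ) (p : ℝ × X) : ℝ :=
  if p.1 ∈ Set.Ioo (0 : ℝ) 1 then sInf {y | p.1 ≤ kcdf k p.2 y} else 0

lemma kquant_le_iff {X : Type*} (k : X → Measure ℝ) {r : ℝ} (hr : r ∈ Set.Ioo (0 : ℝ) 1)
    (x : X) (y : ℝ) : kquant k (r, x) ≤ y ↔ r ≤ kcdf k x y := by
  have hne : {z | r ≤ kcdf k x z}.Nonempty := by
    have := (tendsto_cdf_atTop (k x)).eventually (eventually_gt_nhds hr.2)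
    obtain ⟨z, hz⟩ := this.exists
    exact ⟨z, hz.le⟩
  have hbdd : BddBelow {z | r ≤ kcdf k x z} := by
    have := (tendsto_cdf_atBot (k x)).eventually (eventually_lt_nhds hr.1)
    obtain ⟨z₀, hz₀⟩ := this.exists
    refine ⟨z₀, fun w hw => ?_⟩
    by_contra h
    push_neg at h
    exact absurd (hw.trans ((monotone_cdf (k x)) h.le)) (not_le.2 hz₀)
  rw [kquant, if_pos hr]
  constructor
  · intro h
    have heps : ∀ ε > (0 : ℝ), r ≤ kcdf k x (y + ε) := by
      intro ε hε
      obtain ⟨w, hw, hwlt⟩ := exists_lt_of_csInf_lt hne (lt_add_of_pos_right _ hε)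
      exact hw.trans (monotone_cdf (k x) (hwlt.le.trans (add_le_add_left h ε)))
    have h2 : Tendsto (kcdf k x) (𝓝[>] y) (𝓝 (kcdf k x y)) :=
      ((cdf (k x)).right_continuous y).tendsto.mono_left
        (nhdsWithin_mono _ Ioi_subset_Ici_self)
    refine ge_of_tendsto h2 ?_
    filter_upwards [self_mem_nhdsWithin] with z hz
    have := heps (z - y) (sub_pos.2 hz)
    simpa using this
  · intro h
    exact csInf_le hbdd h

lemma kcdf_measurable {X : Type*} [MeasurableSpace X] (k : X → Measure ℝ) (hk : Measurable k)
    (hkp : ∀ x, IsProbabilityMeasure (k x)) (y : ℝ) :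
    Measurable fun x => kcdf k x y := by
  have : (fun x => kcdf k x y) = fun x => (k x (Set.Iic y)).toReal := by
    funext x
    haveI := hkp x
    exact cdf_eq_real _ y
  rw [this]
  exact ((Measure.measurable_coe measurableSet_Iic).comp hk).ennreal_toReal

lemma kquant_measurable {X : Type*} [MeasurableSpace X] (k : X → Measure ℝ) (hk : Measurable k)
    (hkp : ∀ x, IsProbabilityMeasure (k x)) : Measurable (kquant k) := by
  apply measurable_of_Iic
  intro y
  have hset : kquant k ⁻¹' Set.Iic y =
      ((Set.Ioo (0 : ℝ) 1 ×ˢ (Set.univ : Set X)) ∩ {p | p.1 ≤ kcdf k p.2 y}) ∪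
      ((Set.Ioo (0 : ℝ) 1 ×ˢ (Set.univ : Set X))ᶜ ∩ {_p : ℝ × X | (0 : ℝ) ≤ y}) := by
    ext ⟨r, x⟩
    by_cases hr : r ∈ Set.Ioo (0 : ℝ) 1
    · simp only [Set.mem_preimage, Set.mem_Iic, Set.mem_union, Set.mem_inter_iff,
        Set.mem_prod, Set.mem_univ, and_true, Set.mem_compl_iff, Set.mem_setOf_eq, hr,
        true_and, not_true, false_and, or_false]
      exact kquant_le_iff k hr x y
    · simp only [Set.mem_preimage, Set.mem_Iic, Set.mem_union, Set.mem_inter_iff,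
        Set.mem_prod, Set.mem_univ, and_true, Set.mem_compl_iff, Set.mem_setOf_eq, hr,
        false_and, false_or, not_false_iff, true_and]
      rw [kquant, if_neg hr]
  rw [hset]
  have h1 : MeasurableSet {p : ℝ × X | p.1 ≤ kcdf k p.2 y} :=
    measurableSet_le measurable_fst ((kcdf_measurable k hk hkp y).comp measurable_snd)
  have h2 : MeasurableSet (Set.Ioo (0 : ℝ) 1 ×ˢ (Set.univ : Set X)) :=
    measurableSet_Ioo.prod MeasurableSet.univ
  have h3 : MeasurableSet {_p : ℝ × X | (0 : ℝ) ≤ y} := by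
    by_cases h : (0 : ℝ) ≤ y
    · simp [h]
    · simp [h]
  exact (h2.inter h1).union (h2.compl.inter h3)

end Aux


open ProbabilityTheory in
/-- Randomization: every probability kernel `k` from a measurable space `X` to `ℝ`
arises from a jointly measurable function `f : ℝ × X → ℝ` via the uniform
distribution `υ` on `[0,1]`: `k x U = υ {r | f (r, x) ∈ U}`. -/
theorem stmt17 {X : Type*} [MeasurableSpace X]
    (k : X → Measure ℝ) (hk : Measurable k) (hkp : ∀ x, IsProbabilityMeasure (k x)) :
    ∃ f : ℝ × X → ℝ, Measurable f ∧
      ∀ (x : X) (U : Set ℝ), MeasurableSet U →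
        k x U = (volume.restrict (Set.Icc (0 : ℝ) 1)) {r : ℝ | f (r, x) ∈ U} := by
  classical
  refine ⟨kquant k, kquant_measurable k hk hkp, ?_⟩
  intro x U hU
  haveI := hkp x
  have hfx : Measurable fun r => kquant k (r, x) :=
    (kquant_measurable k hk hkp).comp (measurable_id.prodMk measurable_const)
  set υ := volume.restrict (Set.Icc (0 : ℝ) 1) with hυ
  have hmap : k x = υ.map (fun r => kquant k (r, x)) := by
    refine (Measure.ext_of_Iic _ _ (fun a => ?_)).symm
    rw [Measure.map_apply hfx measurableSet_Iic]
    have hc0 : (0 : ℝ) ≤ cdf (k x) a := cdf_nonneg _ _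
    have hc1 : cdf (k x) a ≤ 1 := cdf_le_one _ _
    set c := cdf (k x) a with hcdef
    have hSmeas : MeasurableSet ((fun r => kquant k (r, x)) ⁻¹' Set.Iic a) :=
      hfx measurableSet_Iic
    rw [hυ, Measure.restrict_apply hSmeas]
    have hsub1 : Set.Ioo (0 : ℝ) 1 ∩ Set.Iic c ⊆
        ((fun r => kquant k (r, x)) ⁻¹' Set.Iic a) ∩ Set.Icc (0 : ℝ) 1 := by
      rintro r ⟨hr, hrc⟩
      exact ⟨(kquant_le_iff k hr x a).2 hrc, Set.Ioo_subset_Icc_self hr⟩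
    have hsub2 : ((fun r => kquant k (r, x)) ⁻¹' Set.Iic a) ∩ Set.Icc (0 : ℝ) 1 ⊆
        (Set.Ioo (0 : ℝ) 1 ∩ Set.Iic c) ∪ ({0, 1} : Set ℝ) := by
      rintro r ⟨hrf, hr01⟩
      by_cases hr : r ∈ Set.Ioo (0 : ℝ) 1
      · exact Or.inl ⟨hr, (kquant_le_iff k hr x a).1 hrf⟩
      · right
        rcases hr01 with ⟨h0, h1⟩
        rcases eq_or_lt_of_le h0 with h | h
        · exact Or.inl h.symm
        · rcases eq_or_lt_of_le h1 with h' | h'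
          · exact Or.inr h'
          · exact absurd ⟨h, h'⟩ hr
    have hpair : volume ({0, 1} : Set ℝ) = 0 :=
      (Set.toFinite _).measure_zero _
    have hval : volume (Set.Ioo (0 : ℝ) 1 ∩ Set.Iic c) = ENNReal.ofReal c := by
      rcases eq_or_lt_of_le hc1 with h | h
      · have : Set.Ioo (0 : ℝ) 1 ∩ Set.Iic c = Set.Ioo 0 1 := by
          rw [Set.inter_eq_left]
          intro r hr
          exact hr.2.le.trans h.ge
        rw [this, Real.volume_Ioo, h]
        norm_num
      · have : Set.Ioo (0 : ℝ) 1 ∩ Set.Iic c = Set.Ioc 0 c := by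
          ext r
          constructor
          · rintro ⟨⟨h1, _⟩, h2⟩; exact ⟨h1, h2⟩
          · rintro ⟨h1, h2⟩; exact ⟨⟨h1, lt_of_le_of_lt h2 h⟩, h2⟩
        rw [this, Real.volume_Ioc, sub_zero]
    have hle1 : volume (((fun r => kquant k (r, x)) ⁻¹' Set.Iic a) ∩ Set.Icc (0 : ℝ) 1)
        ≤ ENNReal.ofReal c := by
      calc volume (((fun r => kquant k (r, x)) ⁻¹' Set.Iic a) ∩ Set.Icc (0 : ℝ) 1)
          ≤ volume ((Set.Ioo (0 : ℝ) 1 ∩ Set.Iic c) ∪ ({0, 1} : Set ℝ)) :=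
            measure_mono hsub2
        _ ≤ volume (Set.Ioo (0 : ℝ) 1 ∩ Set.Iic c) + volume ({0, 1} : Set ℝ) :=
            measure_union_le _ _
        _ = ENNReal.ofReal c := by rw [hpair, add_zero, hval]
    have hle2 : ENNReal.ofReal c ≤
        volume (((fun r => kquant k (r, x)) ⁻¹' Set.Iic a) ∩ Set.Icc (0 : ℝ) 1) := by
      rw [← hval]; exact measure_mono hsub1
    rw [le_antisymm hle1 hle2, hcdef, ofReal_cdf]
  rw [hmap, Measure.map_apply hfx hU]
  rfl
end
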